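/- Let A be a graded algebra over a field k with char k ≠ 2,3, δ the Hochschild differential, and d₂, d₃, ..., d_{k−1} odd-degree superderivations on the tensor coalgebra (dual picture of Hochschild cochains m₂,...,m_{k−1}) satisfying [d₂, d_j] = φ_j* for all j < k, where φ_k* = −Σ_{i+j=k+2, 3≤i≤j} c_{ij}[d_i, d_j] with c_{ij} = 1 for i < j and c_{ii} = 1/2. Then [d₂, φ_k*] = 0; equivalently, the quadratic expression φ_k(m₃,...,m_{k−1}) appearing on the right-hand side of the A∞-extension equation δm_k = φ_k(m₃,...,m_{k−1}) is a Hochschild cocycle. -/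

import Mathlib

def IsSuperDerivation {k : Type*} [Field k] {V : Type*} [AddCommGroup V] [Module k V]
    (𝒜 : ℤ → Submodule k (TensorAlgebra k V)) (n : ℤ)
    (f : Module.End k (TensorAlgebra k V)) : Prop :=
  (∀ m : ℤ, ∀ x ∈ 𝒜 m, f x ∈ 𝒜 (m + n)) ∧
  (∀ (m : ℤ) (x y : TensorAlgebra k V), x ∈ 𝒜 m →
    f (x * y) = f x * y + (Int.negOnePow (m * n) : ℤ) • (x * f y))

/-- `φ_m* = −Σ_{i+j = m+2, 3 ≤ i ≤ j} c_{ij}[d_i, d_j]`, where the brackets of the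
odd derivations `d_i` are anticommutators, `c_{ij} = 1` for `i < j` and
`c_{ii} = 1/2`. -/
noncomputable def phiStar {k : Type*} [Field k] {V : Type*} [AddCommGroup V] [Module k V]
    (d : ℕ → Module.End k (TensorAlgebra k V)) (m : ℕ) :
    Module.End k (TensorAlgebra k V) :=
  - ∑ i ∈ Finset.Icc 3 (m + 2),
      if i < m + 2 - i then d i * d (m + 2 - i) + d (m + 2 - i) * d i
      else if i = m + 2 - i then (2 : k)⁻¹ • (d i * d i + d i * d i)
      else 0

/-!
Write `{a, b} = a b + b a` and `P_m = ∑_{3 ≤ i ≤ m-1} {d_i, d_{m+2-i}}`, so that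
`φ_m* = -P_m / 2`. The super-Leibniz rule `[a, {b, c}] = [{a, b}, c] + [{a, c}, b]` turns
`[d₂, P_K]` into two copies, exchanged by `i ↦ K + 2 - i`, of `∑_i [{d₂, d_i}, d_{K+2-i}]`.
By hypothesis this is `-1/2 ∑_i [P_i, d_{K+2-i}]`, which is the sum of `[{d_a, d_b}, d_c]` over all
`a + b + c = K + 4` with `a, b, c ≥ 3`. That sum is invariant under cyclic permutation of
`(a, b, c)`, and the super-Jacobi identity says the three cyclic terms add up to zero;
so three times the sum vanishes, hence the sum does since `char k ≠ 3`.
-/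

open Finset

theorem Finset.sum_reflect_of_symmetric {M : Type*} [AddCommMonoid M] (f : ℕ → ℕ → M)
    {s : Finset ℕ} {n : ℕ} (hs : ∀ i ∈ s, i ≤ n ∧ n - i ∈ s) :
    ∑ i ∈ s, f (n - i) i = ∑ i ∈ s, f i (n - i) :=
  sum_nbij' (n - ·) (n - ·) (fun i hi => (hs i hi).2) (fun i hi => (hs i hi).2)
    (fun i hi => Nat.sub_sub_self (hs i hi).1) (fun i hi => Nat.sub_sub_self (hs i hi).1)
    fun i hi => by rw [Nat.sub_sub_self (hs i hi).1]

theorem Finset.sum_eq_zero_of_cyclic {k M α : Type*} [Field k] [AddCommGroup M] [Module k M]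
    (h3 : (3 : k) ≠ 0) {s : Finset α} (σ : α → α) (hσ : ∀ x ∈ s, σ x ∈ s)
    (hσ3 : ∀ x ∈ s, σ (σ (σ x)) = x) (f : α → M)
    (hf : ∀ x ∈ s, f x + f (σ x) + f (σ (σ x)) = 0) : ∑ x ∈ s, f x = 0 := by
  have hinv : ∀ g : α → M, ∑ x ∈ s, g (σ x) = ∑ x ∈ s, g x := fun g =>
    sum_nbij' σ (fun x => σ (σ x)) hσ (fun x hx => hσ _ (hσ x hx)) hσ3 hσ3 fun _ _ => rfl
  have h3sum : (3 : k) • ∑ x ∈ s, f x = 0 := by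
    calc (3 : k) • ∑ x ∈ s, f x
        = ∑ x ∈ s, f x + ∑ x ∈ s, f (σ x) + ∑ x ∈ s, f (σ (σ x)) := by
          rw [hinv (fun x => f (σ x)), hinv f]
          module
      _ = 0 := by rw [← sum_add_distrib, ← sum_add_distrib]; exact sum_eq_zero hf
  exact (smul_eq_zero.mp h3sum).resolve_left h3

def tripleCompositions (n : ℕ) : Finset (ℕ × ℕ × ℕ) :=
  (Icc 3 n ×ˢ Icc 3 n ×ˢ Icc 3 n).filter fun t => t.1 + t.2.1 + t.2.2 = n

theorem mem_tripleCompositions {n : ℕ} {t : ℕ × ℕ × ℕ} :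
    t ∈ tripleCompositions n ↔ 3 ≤ t.1 ∧ 3 ≤ t.2.1 ∧ 3 ≤ t.2.2 ∧ t.1 + t.2.1 + t.2.2 = n := by
  simp only [tripleCompositions, mem_filter, mem_product, mem_Icc]
  omega

theorem Icc_three_pred_symm (m : ℕ) :
    ∀ i ∈ Icc 3 (m - 1), i ≤ m + 2 ∧ m + 2 - i ∈ Icc 3 (m - 1) := by
  simp only [mem_Icc]
  omega

def anticomm {R : Type*} [Ring R] (a b : R) : R := a * b + b * a

def anticommSum {R : Type*} [Ring R] (d : ℕ → R) (m : ℕ) : R :=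
  ∑ i ∈ Icc 3 (m - 1), anticomm (d i) (d (m + 2 - i))

section AnticommBracket

attribute [local instance] LieRing.ofAssociativeRing

variable {R : Type*} [Ring R]

theorem lie_anticomm (a b c : R) : ⁅a, anticomm b c⁆ = ⁅anticomm a b, c⁆ + ⁅anticomm a c, b⁆ := by
  simp only [anticomm, Ring.lie_def]
  noncomm_ring

theorem lie_anticomm_cyclic (a b c : R) :
    ⁅anticomm a b, c⁆ + ⁅anticomm b c, a⁆ + ⁅anticomm c a, b⁆ = 0 := by
  simp only [anticomm, Ring.lie_def]
  noncomm_ring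

variable {k : Type*} [Field k] [Algebra k R]

theorem sum_lie_anticomm_tripleCompositions_eq_zero (h3 : (3 : k) ≠ 0) (d : ℕ → R) (n : ℕ) :
    ∑ t ∈ tripleCompositions n, ⁅anticomm (d t.1) (d t.2.1), d t.2.2⁆ = 0 :=
  sum_eq_zero_of_cyclic h3 (fun t => (t.2.1, t.2.2, t.1))
    (fun t ht => by simp only [mem_tripleCompositions] at ht ⊢; omega) (fun _ _ => rfl) _
    fun t _ => lie_anticomm_cyclic (d t.1) (d t.2.1) (d t.2.2)

theorem sum_lie_anticommSum_eq_sum_tripleCompositions (d : ℕ → R) (K : ℕ) :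
    ∑ i ∈ Icc 3 (K - 1), ⁅anticommSum d i, d (K + 2 - i)⁆ =
      ∑ t ∈ tripleCompositions (K + 4), ⁅anticomm (d t.1) (d t.2.1), d t.2.2⁆ := by
  simp only [anticommSum, sum_lie]
  rw [sum_sigma']
  refine sum_nbij' (fun x => (x.2, x.1 + 2 - x.2, K + 2 - x.1)) (fun t => ⟨t.1 + t.2.1 - 2, t.1⟩)
    ?_ ?_ ?_ ?_ ?_
  · rintro ⟨i, p⟩ h
    simp only [mem_sigma, mem_Icc] at h
    simp only [mem_tripleCompositions]
    omega
  · rintro ⟨a, b, c⟩ h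
    simp only [mem_tripleCompositions] at h
    simp only [mem_sigma, mem_Icc]
    omega
  · rintro ⟨i, p⟩ h
    simp only [mem_sigma, mem_Icc] at h
    simp only [Sigma.mk.injEq, heq_eq_eq, and_true]
    omega
  · rintro ⟨a, b, c⟩ h
    simp only [mem_tripleCompositions] at h
    simp only [Prod.mk.injEq, true_and]
    omega
  · rintro ⟨i, p⟩ -
    rfl

theorem lie_anticommSum_eq_zero (h3 : (3 : k) ≠ 0) (d : ℕ → R) (K : ℕ)
    (hbr : ∀ j, 3 ≤ j → j ≤ K - 1 → anticomm (d 2) (d j) = -((2 : k)⁻¹ • anticommSum d j)) :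
    ⁅d 2, anticommSum d K⁆ = 0 := by
  have hhalf : ∑ i ∈ Icc 3 (K - 1), ⁅anticomm (d 2) (d i), d (K + 2 - i)⁆ = 0 := by
    calc ∑ i ∈ Icc 3 (K - 1), ⁅anticomm (d 2) (d i), d (K + 2 - i)⁆
        = -((2 : k)⁻¹ • ∑ i ∈ Icc 3 (K - 1), ⁅anticommSum d i, d (K + 2 - i)⁆) := by
          rw [smul_sum, ← sum_neg_distrib]
          refine sum_congr rfl fun i hi => ?_
          rw [mem_Icc] at hi
          rw [hbr i hi.1 hi.2, neg_lie, smul_lie]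
      _ = 0 := by
          rw [sum_lie_anticommSum_eq_sum_tripleCompositions,
            sum_lie_anticomm_tripleCompositions_eq_zero h3, smul_zero, neg_zero]
  calc ⁅d 2, anticommSum d K⁆
      = ∑ i ∈ Icc 3 (K - 1), ⁅anticomm (d 2) (d i), d (K + 2 - i)⁆ +
          ∑ i ∈ Icc 3 (K - 1), ⁅anticomm (d 2) (d (K + 2 - i)), d i⁆ := by
        simp only [anticommSum, lie_sum, lie_anticomm, sum_add_distrib]
    _ = 0 := by
        rw [sum_reflect_of_symmetric (fun j i => ⁅anticomm (d 2) (d j), d i⁆)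
          (Icc_three_pred_symm K), hhalf, add_zero]

end AnticommBracket

theorem phiStar_eq_neg_inv_two_smul_anticommSum {k V : Type*} [Field k] [AddCommGroup V]
    [Module k V] (h2 : (2 : k) ≠ 0) (d : ℕ → Module.End k (TensorAlgebra k V)) (m : ℕ) :
    phiStar d m = -((2 : k)⁻¹ • anticommSum d m) := by
  set g : ℕ → Module.End k (TensorAlgebra k V) := fun i =>
    if i < m + 2 - i then d i * d (m + 2 - i) + d (m + 2 - i) * d i
    else if i = m + 2 - i then (2 : k)⁻¹ • (d i * d i + d i * d i) else 0
  have hsupp : ∑ i ∈ Icc 3 (m + 2), g i = ∑ i ∈ Icc 3 (m - 1), g i := by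
    refine (sum_subset (Icc_subset_Icc_right (by omega)) fun i hi hi' => ?_).symm
    simp only [mem_Icc] at hi hi'
    simp only [g, if_neg (show ¬i < m + 2 - i by omega), if_neg (show i ≠ m + 2 - i by omega)]
  have hpair : ∀ i ≤ m + 2, g i + g (m + 2 - i) = anticomm (d i) (d (m + 2 - i)) := by
    intro i hi
    have hrefl : m + 2 - (m + 2 - i) = i := by omega
    rcases lt_trichotomy i (m + 2 - i) with hlt | heq | hgt
    · simp only [g, hrefl, if_pos hlt, if_neg (show ¬m + 2 - i < i by omega),
        if_neg (show m + 2 - i ≠ i by omega), add_zero, anticomm]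
    · simp only [g, ← heq, lt_irrefl, if_false, if_true, anticomm]
      rw [← add_smul, ← two_mul, mul_inv_cancel₀ h2, one_smul]
    · simp only [g, hrefl, if_neg (show ¬i < m + 2 - i by omega),
        if_neg (show i ≠ m + 2 - i by omega), if_pos hgt, zero_add, anticomm]
      exact add_comm _ _
  have hsum : anticommSum d m = (2 : k) • ∑ i ∈ Icc 3 (m - 1), g i := by
    rw [anticommSum, ← sum_congr rfl fun i hi => hpair i (Icc_three_pred_symm m i hi).1,
      sum_add_distrib, sum_reflect_of_symmetric (fun j _ => g j) (Icc_three_pred_symm m),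
      two_smul]
  rw [phiStar, hsupp, hsum, inv_smul_smul₀ h2]

theorem stmt_19_general (k : Type*) [Field k] (h2 : ringChar k ≠ 2) (h3 : ringChar k ≠ 3)
    (V : Type*) [AddCommGroup V] [Module k V]
    (K : ℕ) (d : ℕ → Module.End k (TensorAlgebra k V))
    (hbr : ∀ j, 3 ≤ j → j ≤ K - 1 → d 2 * d j + d j * d 2 = phiStar d j) :
    d 2 * phiStar d K - phiStar d K * d 2 = 0 := by
  have h2' : (2 : k) ≠ 0 := Ring.two_ne_zero h2
  have h3' : (3 : k) ≠ 0 := by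
    rw [← Nat.cast_ofNat, Ne, ringChar.spec, Nat.dvd_prime Nat.prime_three]
    exact fun h => h.elim CharP.ringChar_ne_one h3
  have hcomm : ⁅d 2, anticommSum d K⁆ = 0 :=
    lie_anticommSum_eq_zero h3' d K fun j hj hj' => by
      rw [← phiStar_eq_neg_inv_two_smul_anticommSum h2']
      exact hbr j hj hj'
  rw [phiStar_eq_neg_inv_two_smul_anticommSum h2', sub_eq_zero]
  exact ((commute_iff_lie_eq.mpr hcomm).smul_right _).neg_right.eq

/-- If `d₂, d₃, …, d_{K−1}` are odd-degree superderivations on the tensor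
(co)algebra (the duals of Hochschild cochains `m₂, …, m_{K−1}`) satisfying
`[d₂, d_j] = φ_j*` for all `j < K`, then `[d₂, φ_K*] = 0`; i.e. the quadratic
expression `φ_K(m₃, …, m_{K−1})` in the `A∞`-extension equation
`δ m_K = φ_K(m₃, …, m_{K−1})` is a Hochschild cocycle (char k ≠ 2, 3). -/
theorem stmt_19 (k : Type*) [Field k] (h2 : ringChar k ≠ 2) (h3 : ringChar k ≠ 3)
    (V : Type*) [AddCommGroup V] [Module k V]
    (𝒜 : ℤ → Submodule k (TensorAlgebra k V))
    (K : ℕ) (hK : 3 ≤ K)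
    (d : ℕ → Module.End k (TensorAlgebra k V))
    (deg : ℕ → ℤ) (hodd : ∀ i, 2 ≤ i → i ≤ K - 1 → Odd (deg i))
    (hder : ∀ i, 2 ≤ i → i ≤ K - 1 → IsSuperDerivation 𝒜 (deg i) (d i))
    (hbr : ∀ j, 3 ≤ j → j ≤ K - 1 → d 2 * d j + d j * d 2 = phiStar d j) :
    d 2 * phiStar d K - phiStar d K * d 2 = 0 :=
  stmt_19_general k h2 h3 V K d hbr
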